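/- arXiv:q-bio/0510051 — 3 statements merged into one kernel-verified Lean document; each statement's English description precedes it below -/
import Mathlib

section
/- For two scalar systems with mutual excitatory coupling ẋ_1 = f(x_1,t) + k x_2, ẋ_2 = f(x_2,t) + k x_1, the subspace {x_1 = x_2} is flow-invariant, and if k > sup_{a,t} (∂f/∂x)(a,t), then x_1(t) − x_2(t) → 0 exponentially with rate k − sup(∂f/∂x), for any initial conditions. -/
/-!
The difference `y = x₁ - x₂` satisfies `y' = f(x₁,t) - f(x₂,t) - k y`. Since `∂f/∂x ≤ c`, the mean
value theorem gives `y (f(x₁,t) - f(x₂,t)) ≤ c y²`, hence `y y' ≤ -(k - c) y²`, so that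
`y² e^{2(k-c)t}` is nonincreasing.
-/

open Real

lemma sub_mul_sub_le_of_hasDerivAt_le {g g' : ℝ → ℝ} {c : ℝ}
    (hg : ∀ z, HasDerivAt g (g' z) z) (hc : ∀ z, g' z ≤ c) (a b : ℝ) :
    (a - b) * (g a - g b) ≤ c * (a - b) ^ 2 := by
  have hdiff : Differentiable ℝ g := fun z => (hg z).differentiableAt
  have hderiv : ∀ z, deriv g z ≤ c := fun z => (hg z).deriv ▸ hc z
  rcases le_total b a with hba | hab
  · nlinarith [image_sub_le_mul_sub_of_deriv_le hdiff hderiv hba]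
  · nlinarith [image_sub_le_mul_sub_of_deriv_le hdiff hderiv hab]

lemma antitone_sq_mul_exp_of_mul_deriv_le {y y' : ℝ → ℝ} {r : ℝ}
    (hy : ∀ s, HasDerivAt y (y' s) s) (hdecay : ∀ s, y s * y' s ≤ -r * y s ^ 2) :
    Antitone fun s => y s ^ 2 * exp (2 * r * s) := by
  have hderiv : ∀ s, HasDerivAt (fun s => y s ^ 2 * exp (2 * r * s))
      (2 * exp (2 * r * s) * (y s * y' s + r * y s ^ 2)) s := by
    intro s
    have hexp := ((hasDerivAt_id' s).const_mul (2 * r)).exp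
    refine (((hy s).fun_pow 2).fun_mul hexp).congr_deriv ?_
    ring
  refine antitone_of_deriv_nonpos (fun s => (hderiv s).differentiableAt) fun s => ?_
  rw [(hderiv s).deriv]
  nlinarith [hdecay s, exp_pos (2 * r * s)]

lemma abs_le_abs_mul_exp_of_mul_deriv_le {y y' : ℝ → ℝ} {r : ℝ}
    (hy : ∀ s, HasDerivAt y (y' s) s) (hdecay : ∀ s, y s * y' s ≤ -r * y s ^ 2)
    {t : ℝ} (ht : 0 ≤ t) :
    |y t| ≤ |y 0| * exp (-r * t) := by
  have hweighted : y t ^ 2 * exp (2 * r * t) ≤ y 0 ^ 2 := by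
    simpa using antitone_sq_mul_exp_of_mul_deriv_le hy hdecay ht
  have hexp : exp (-r * t) ^ 2 * exp (2 * r * t) = 1 := by
    rw [← exp_nat_mul, ← exp_add, ← exp_zero]
    push_cast
    ring_nf
  refine abs_le_of_sq_le_sq' ?_ (by positivity) |>.2
  rw [sq_abs, mul_pow, sq_abs]
  calc y t ^ 2 = y t ^ 2 * exp (2 * r * t) * exp (-r * t) ^ 2 := by
        rw [mul_assoc, mul_comm (exp _), hexp, mul_one]
    _ ≤ y 0 ^ 2 * exp (-r * t) ^ 2 := by gcongr

theorem stmt_12_general (f : ℝ → ℝ → ℝ) (f' : ℝ → ℝ → ℝ)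
    (hf' : ∀ a t, HasDerivAt (fun z => f z t) (f' a t) a)
    (c : ℝ) (hc : ∀ a t, f' a t ≤ c)
    (k : ℝ) :
    (∀ (a t : ℝ),
      (fun p : ℝ × ℝ => (f p.1 t + k * p.2, f p.2 t + k * p.1)) (a, a) ∈
        {p : ℝ × ℝ | p.1 = p.2}) ∧
    (∀ x₁ x₂ : ℝ → ℝ,
      (∀ t, HasDerivAt x₁ (f (x₁ t) t + k * x₂ t) t) →
      (∀ t, HasDerivAt x₂ (f (x₂ t) t + k * x₁ t) t) →
      ∀ t : ℝ, 0 ≤ t →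
        |x₁ t - x₂ t| ≤ |x₁ 0 - x₂ 0| * Real.exp (-(k - c) * t)) := by
  refine ⟨fun _ _ => rfl, fun x₁ x₂ h₁ h₂ t ht => ?_⟩
  refine abs_le_abs_mul_exp_of_mul_deriv_le (fun s => (h₁ s).sub (h₂ s)) (fun s => ?_) ht
  have hlip := sub_mul_sub_le_of_hasDerivAt_le (fun z => hf' z s) (fun z => hc z s) (x₁ s) (x₂ s)
  rw [Pi.sub_apply]
  linear_combination hlip

/-- For two mutually excitatorily coupled scalar systems
ẋ₁ = f(x₁,t) + k x₂, ẋ₂ = f(x₂,t) + k x₁, the diagonal {x₁ = x₂} is flow-invariant, and if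
k > c ≥ sup ∂f/∂x, then |x₁(t) − x₂(t)| → 0 exponentially with rate k − c for any initial
conditions. -/
theorem stmt_12 (f : ℝ → ℝ → ℝ) (f' : ℝ → ℝ → ℝ)
    (hf' : ∀ a t, HasDerivAt (fun z => f z t) (f' a t) a)
    (c : ℝ) (hc : ∀ a t, f' a t ≤ c)
    (k : ℝ) (hk : c < k) :
    (∀ (a t : ℝ),
      (fun p : ℝ × ℝ => (f p.1 t + k * p.2, f p.2 t + k * p.1)) (a, a) ∈
        {p : ℝ × ℝ | p.1 = p.2}) ∧
    (∀ x₁ x₂ : ℝ → ℝ,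
      (∀ t, HasDerivAt x₁ (f (x₁ t) t + k * x₂ t) t) →
      (∀ t, HasDerivAt x₂ (f (x₂ t) t + k * x₁ t) t) →
      ∀ t : ℝ, 0 ≤ t →
        |x₁ t - x₂ t| ≤ |x₁ 0 - x₂ 0| * Real.exp (-(k - c) * t)) :=
  stmt_12_general f f' hf' c hc k
end

section
/- Negative feedback combination: let J = [[J_1, −k J_21^T],[J_21, J_2]] with k > 0, and suppose W_1 J_1 W_1^T and W_2 J_2 W_2^T have uniformly negative definite symmetric parts (with bound −β < 0). Then with Θ = diag(I, √k I), the symmetric part of Θ (V J V^T) Θ^{-1}, where V = diag(W_1, W_2), equals blockdiag of the symmetric parts of W_1 J_1 W_1^T and W_2 J_2 W_2^T (the off-diagonal blocks cancel), and is hence uniformly negative definite with the same bound. -/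
/-! Conjugation by `Θ = diag(1, √k)` scales the off-diagonal blocks of `V J Vᵀ` by `√k⁻¹` and
`√k`. As the upper block is `-k` times the transpose of the lower one, the rescaled blocks are
negatives of each other's transposes and cancel in the symmetric part. A quadratic form only sees
the symmetric part of its matrix, so the bound reduces to the two diagonal blocks. -/

open Matrix

namespace Matrix

variable {R l m n o : Type*}

def symmPart [Field R] (M : Matrix n n R) : Matrix n n R := (1 / 2 : R) • (M + Mᵀ)

theorem dotProduct_symmPart_mulVec [Field R] [NeZero (2 : R)] [Fintype n]
    (M : Matrix n n R) (v : n → R) : v ⬝ᵥ M.symmPart *ᵥ v = v ⬝ᵥ M *ᵥ v := by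
  rw [symmPart, smul_mulVec, add_mulVec, dotProduct_smul, dotProduct_add,
    dotProduct_transpose_mulVec, smul_eq_mul]
  field_simp
  ring

theorem symmPart_fromBlocks_neg_transpose [Field R] (A : Matrix m m R) (C : Matrix n m R)
    (D : Matrix n n R) :
    (fromBlocks A (-Cᵀ) C D).symmPart = fromBlocks A.symmPart 0 0 D.symmPart := by
  simp only [symmPart, fromBlocks_transpose, transpose_neg, transpose_transpose, fromBlocks_add,
    neg_add_cancel, add_neg_cancel, fromBlocks_smul, smul_zero]

theorem fromBlocks_mul_fromBlocks_mul_transpose [CommSemiring R] [Fintype m] [Fintype n]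
    (W₁ : Matrix l m R) (W₂ : Matrix o n R) (A : Matrix m m R)
    (B : Matrix m n R) (C : Matrix n m R) (D : Matrix n n R) :
    fromBlocks W₁ 0 0 W₂ * fromBlocks A B C D * (fromBlocks W₁ 0 0 W₂)ᵀ =
      fromBlocks (W₁ * A * W₁ᵀ) (W₁ * B * W₂ᵀ) (W₂ * C * W₁ᵀ) (W₂ * D * W₂ᵀ) := by
  simp [fromBlocks_transpose, fromBlocks_multiply]

theorem fromBlocks_scale_mul_mul_scale_inv [Field R] [Fintype m] [Fintype n] [DecidableEq m]
    [DecidableEq n] {c : R} (hc : c ≠ 0) (A : Matrix m m R) (B : Matrix m n R)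
    (C : Matrix n m R) (D : Matrix n n R) :
    fromBlocks 1 0 0 (c • 1) * fromBlocks A B C D * fromBlocks 1 0 0 (c⁻¹ • 1) =
      fromBlocks A (c⁻¹ • B) (c • C) D := by
  simp [fromBlocks_multiply, smul_smul, hc]

theorem dotProduct_fromBlocks_zero_zero_mulVec [NonUnitalNonAssocSemiring R] [Fintype m] [Fintype n]
    (A : Matrix m m R) (D : Matrix n n R) (y : m ⊕ n → R) :
    y ⬝ᵥ fromBlocks A 0 0 D *ᵥ y =
      (y ∘ Sum.inl) ⬝ᵥ A *ᵥ (y ∘ Sum.inl) + (y ∘ Sum.inr) ⬝ᵥ D *ᵥ (y ∘ Sum.inr) := by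
  rw [← Sum.elim_comp_inl_inr y, fromBlocks_mulVec, sumElim_dotProduct_sumElim]
  simp

theorem symmPart_feedback_conj [Field R] [Fintype l] [Fintype m] [Fintype n] [Fintype o]
    [DecidableEq l] [DecidableEq o] {c k : R} (hc : c ≠ 0) (hck : c ^ 2 = k)
    (W₁ : Matrix l m R) (W₂ : Matrix o n R) (A : Matrix m m R) (C : Matrix n m R)
    (D : Matrix n n R) :
    (fromBlocks 1 0 0 (c • 1) *
        (fromBlocks W₁ 0 0 W₂ * fromBlocks A (-(k • Cᵀ)) C D * (fromBlocks W₁ 0 0 W₂)ᵀ) *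
        fromBlocks 1 0 0 (c⁻¹ • 1)).symmPart =
      fromBlocks (W₁ * A * W₁ᵀ).symmPart 0 0 (W₂ * D * W₂ᵀ).symmPart := by
  have hskew : c⁻¹ • (W₁ * -(k • Cᵀ) * W₂ᵀ) = -(c • (W₂ * C * W₁ᵀ))ᵀ := by
    rw [← hck, transpose_smul, transpose_mul, transpose_mul, Matrix.mul_neg, Matrix.neg_mul,
      Matrix.mul_smul, Matrix.smul_mul, smul_neg, smul_smul, Matrix.mul_assoc, pow_two,
      inv_mul_cancel_left₀ hc, transpose_transpose]
  rw [fromBlocks_mul_fromBlocks_mul_transpose, fromBlocks_scale_mul_mul_scale_inv hc, hskew,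
    symmPart_fromBlocks_neg_transpose]

theorem dotProduct_fromBlocks_zero_zero_mulVec_le [CommRing R] [PartialOrder R]
    [IsOrderedAddMonoid R] [Fintype m] [Fintype n] {A : Matrix m m R} {D : Matrix n n R} {β : R}
    (hA : ∀ y, y ⬝ᵥ A *ᵥ y ≤ -β * (y ⬝ᵥ y)) (hD : ∀ y, y ⬝ᵥ D *ᵥ y ≤ -β * (y ⬝ᵥ y))
    (y : m ⊕ n → R) : y ⬝ᵥ fromBlocks A 0 0 D *ᵥ y ≤ -β * (y ⬝ᵥ y) := by
  have hy : y ⬝ᵥ y = (y ∘ Sum.inl) ⬝ᵥ (y ∘ Sum.inl) + (y ∘ Sum.inr) ⬝ᵥ (y ∘ Sum.inr) := by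
    conv_lhs => rw [← Sum.elim_comp_inl_inr y, sumElim_dotProduct_sumElim]
  rw [dotProduct_fromBlocks_zero_zero_mulVec, hy, mul_add]
  exact add_le_add (hA _) (hD _)

end Matrix

theorem stmt_14_general (ι : Type*) (n₁ n₂ m₁ m₂ : ℕ)
    (J₁ : ι → Matrix (Fin n₁) (Fin n₁) ℝ) (J₂ : ι → Matrix (Fin n₂) (Fin n₂) ℝ)
    (J₂₁ : ι → Matrix (Fin n₂) (Fin n₁) ℝ)
    (k : ℝ) (hk : 0 < k)
    (W₁ : Matrix (Fin m₁) (Fin n₁) ℝ) (W₂ : Matrix (Fin m₂) (Fin n₂) ℝ)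
    (J : ι → Matrix (Fin n₁ ⊕ Fin n₂) (Fin n₁ ⊕ Fin n₂) ℝ)
    (hJ : ∀ i, J i = Matrix.fromBlocks (J₁ i) (-(k • (J₂₁ i)ᵀ)) (J₂₁ i) (J₂ i))
    (V : Matrix (Fin m₁ ⊕ Fin m₂) (Fin n₁ ⊕ Fin n₂) ℝ)
    (hV : V = Matrix.fromBlocks W₁ 0 0 W₂)
    (Θ Θinv : Matrix (Fin m₁ ⊕ Fin m₂) (Fin m₁ ⊕ Fin m₂) ℝ)
    (hΘ : Θ = Matrix.fromBlocks 1 0 0 (Real.sqrt k • 1))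
    (hΘinv : Θinv = Matrix.fromBlocks 1 0 0 ((Real.sqrt k)⁻¹ • 1))
    (β : ℝ)
    (h₁ : ∀ i (y : Fin m₁ → ℝ), y ⬝ᵥ (W₁ * J₁ i * W₁ᵀ).mulVec y ≤ -β * (y ⬝ᵥ y))
    (h₂ : ∀ i (y : Fin m₂ → ℝ), y ⬝ᵥ (W₂ * J₂ i * W₂ᵀ).mulVec y ≤ -β * (y ⬝ᵥ y)) :
    (∀ i, ((1 : ℝ) / 2) •
        (Θ * (V * J i * Vᵀ) * Θinv + (Θ * (V * J i * Vᵀ) * Θinv)ᵀ) =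
      Matrix.fromBlocks
        (((1 : ℝ) / 2) • (W₁ * J₁ i * W₁ᵀ + (W₁ * J₁ i * W₁ᵀ)ᵀ)) 0 0
        (((1 : ℝ) / 2) • (W₂ * J₂ i * W₂ᵀ + (W₂ * J₂ i * W₂ᵀ)ᵀ))) ∧
    (∀ i (y : Fin m₁ ⊕ Fin m₂ → ℝ),
      y ⬝ᵥ (Θ * (V * J i * Vᵀ) * Θinv).mulVec y ≤ -β * (y ⬝ᵥ y)) := by
  have hsymm (i : ι) : (Θ * (V * J i * Vᵀ) * Θinv).symmPart =
      fromBlocks (W₁ * J₁ i * W₁ᵀ).symmPart 0 0 (W₂ * J₂ i * W₂ᵀ).symmPart := by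
    rw [hΘ, hΘinv, hV, hJ]
    exact symmPart_feedback_conj (Real.sqrt_pos.mpr hk).ne' (Real.sq_sqrt hk.le) _ _ _ _ _
  refine ⟨hsymm, fun i y => ?_⟩
  rw [← dotProduct_symmPart_mulVec, hsymm]
  refine dotProduct_fromBlocks_zero_zero_mulVec_le (fun y => ?_) (fun y => ?_) y
  · rw [dotProduct_symmPart_mulVec]; exact h₁ i y
  · rw [dotProduct_symmPart_mulVec]; exact h₂ i y

/-- Negative feedback combination. For J = [[J₁, −k J₂₁ᵀ],[J₂₁, J₂]] (k > 0,
possibly state/time dependent through an index ι), V = diag(W₁, W₂), Θ = diag(I, √k I),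
the symmetric part of Θ (V J Vᵀ) Θ⁻¹ equals the block diagonal of the symmetric parts of
W₁ J₁ W₁ᵀ and W₂ J₂ W₂ᵀ (the off-diagonal blocks cancel); hence if these have uniformly
negative definite symmetric parts with bound −β, so does Θ (V J Vᵀ) Θ⁻¹, with the same bound. -/
theorem stmt_14 (ι : Type*) (n₁ n₂ m₁ m₂ : ℕ)
    (J₁ : ι → Matrix (Fin n₁) (Fin n₁) ℝ) (J₂ : ι → Matrix (Fin n₂) (Fin n₂) ℝ)
    (J₂₁ : ι → Matrix (Fin n₂) (Fin n₁) ℝ)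
    (k : ℝ) (hk : 0 < k)
    (W₁ : Matrix (Fin m₁) (Fin n₁) ℝ) (W₂ : Matrix (Fin m₂) (Fin n₂) ℝ)
    (hW₁ : W₁ * W₁ᵀ = 1) (hW₂ : W₂ * W₂ᵀ = 1)
    (J : ι → Matrix (Fin n₁ ⊕ Fin n₂) (Fin n₁ ⊕ Fin n₂) ℝ)
    (hJ : ∀ i, J i = Matrix.fromBlocks (J₁ i) (-(k • (J₂₁ i)ᵀ)) (J₂₁ i) (J₂ i))
    (V : Matrix (Fin m₁ ⊕ Fin m₂) (Fin n₁ ⊕ Fin n₂) ℝ)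
    (hV : V = Matrix.fromBlocks W₁ 0 0 W₂)
    (Θ Θinv : Matrix (Fin m₁ ⊕ Fin m₂) (Fin m₁ ⊕ Fin m₂) ℝ)
    (hΘ : Θ = Matrix.fromBlocks 1 0 0 (Real.sqrt k • 1))
    (hΘinv : Θinv = Matrix.fromBlocks 1 0 0 ((Real.sqrt k)⁻¹ • 1))
    (β : ℝ) (hβ : 0 < β)
    (h₁ : ∀ i (y : Fin m₁ → ℝ), y ⬝ᵥ (W₁ * J₁ i * W₁ᵀ).mulVec y ≤ -β * (y ⬝ᵥ y))
    (h₂ : ∀ i (y : Fin m₂ → ℝ), y ⬝ᵥ (W₂ * J₂ i * W₂ᵀ).mulVec y ≤ -β * (y ⬝ᵥ y)) :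
    (∀ i, ((1 : ℝ) / 2) •
        (Θ * (V * J i * Vᵀ) * Θinv + (Θ * (V * J i * Vᵀ) * Θinv)ᵀ) =
      Matrix.fromBlocks
        (((1 : ℝ) / 2) • (W₁ * J₁ i * W₁ᵀ + (W₁ * J₁ i * W₁ᵀ)ᵀ)) 0 0
        (((1 : ℝ) / 2) • (W₂ * J₂ i * W₂ᵀ + (W₂ * J₂ i * W₂ᵀ)ᵀ))) ∧
    (∀ i (y : Fin m₁ ⊕ Fin m₂ → ℝ),
      y ⬝ᵥ (Θ * (V * J i * Vᵀ) * Θinv).mulVec y ≤ -β * (y ⬝ᵥ y)) :=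
  stmt_14_general ι n₁ n₂ m₁ m₂ J₁ J₂ J₂₁ k hk W₁ W₂ J hJ V hV Θ Θinv hΘ hΘinv β h₁ h₂
end

section
/- Hierarchical combination: let J = [[J_1, 0],[J_21, J_2]] where the symmetric parts of A_1 = W_1 J_1 W_1^T and A_2 = W_2 J_2 W_2^T are uniformly negative definite (bounded above by −β I) and B = W_2 J_21 W_1^T is uniformly bounded in norm. Then for sufficiently small ε > 0, the symmetric part of Θ_ε V J V^T Θ_ε^{-1}, with Θ_ε = diag(I, εI) and V = diag(W_1, W_2), is uniformly negative definite. -/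
open Matrix

lemma dp_self_nonneg {k : ℕ} (v : Fin k → ℝ) : 0 ≤ v ⬝ᵥ v :=
  Finset.sum_nonneg fun i _ => mul_self_nonneg (v i)

lemma dp_cauchy {k : ℕ} (v w : Fin k → ℝ) :
    v ⬝ᵥ w ≤ Real.sqrt (v ⬝ᵥ v) * Real.sqrt (w ⬝ᵥ w) := by
  have h := Finset.sum_mul_sq_le_sq_mul_sq Finset.univ v w
  have h1 : v ⬝ᵥ w ≤ |v ⬝ᵥ w| := le_abs_self _
  have h2 : |v ⬝ᵥ w| = Real.sqrt ((v ⬝ᵥ w) ^ 2) := (Real.sqrt_sq_eq_abs _).symm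
  calc v ⬝ᵥ w ≤ Real.sqrt ((v ⬝ᵥ w) ^ 2) := h2 ▸ h1
    _ ≤ Real.sqrt ((v ⬝ᵥ v) * (w ⬝ᵥ w)) := by
        apply Real.sqrt_le_sqrt
        simpa [dotProduct, sq, Finset.sum_mul_sq_le_sq_mul_sq, pow_two] using h
    _ = Real.sqrt (v ⬝ᵥ v) * Real.sqrt (w ⬝ᵥ w) := Real.sqrt_mul (dp_self_nonneg v) _

/-- Hierarchical combination. For block lower-triangular J = [[J₁, 0],[J₂₁, J₂]]
(possibly state/time dependent through an index ι), with A₁ = W₁ J₁ W₁ᵀ and A₂ = W₂ J₂ W₂ᵀ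
having uniformly negative definite symmetric parts (bound −β) and B = W₂ J₂₁ W₁ᵀ uniformly
bounded, the symmetric part of Θ_ε (V J Vᵀ) Θ_ε⁻¹ = [[A₁, 0],[ε B, A₂]] is uniformly negative
definite for all sufficiently small ε > 0. -/
theorem stmt_15 (ι : Type*) (n₁ n₂ m₁ m₂ : ℕ)
    (J₁ : ι → Matrix (Fin n₁) (Fin n₁) ℝ) (J₂ : ι → Matrix (Fin n₂) (Fin n₂) ℝ)
    (J₂₁ : ι → Matrix (Fin n₂) (Fin n₁) ℝ)
    (W₁ : Matrix (Fin m₁) (Fin n₁) ℝ) (W₂ : Matrix (Fin m₂) (Fin n₂) ℝ)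
    (hW₁ : W₁ * W₁ᵀ = 1) (hW₂ : W₂ * W₂ᵀ = 1)
    (J : ι → Matrix (Fin n₁ ⊕ Fin n₂) (Fin n₁ ⊕ Fin n₂) ℝ)
    (hJ : ∀ i, J i = Matrix.fromBlocks (J₁ i) 0 (J₂₁ i) (J₂ i))
    (V : Matrix (Fin m₁ ⊕ Fin m₂) (Fin n₁ ⊕ Fin n₂) ℝ)
    (hV : V = Matrix.fromBlocks W₁ 0 0 W₂)
    (β : ℝ) (hβ : 0 < β)
    (h₁ : ∀ i (y : Fin m₁ → ℝ), y ⬝ᵥ (W₁ * J₁ i * W₁ᵀ).mulVec y ≤ -β * (y ⬝ᵥ y))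
    (h₂ : ∀ i (y : Fin m₂ → ℝ), y ⬝ᵥ (W₂ * J₂ i * W₂ᵀ).mulVec y ≤ -β * (y ⬝ᵥ y))
    (bnd : ℝ)
    (hB : ∀ i (y : Fin m₁ → ℝ),
      Real.sqrt (((W₂ * J₂₁ i * W₁ᵀ).mulVec y) ⬝ᵥ ((W₂ * J₂₁ i * W₁ᵀ).mulVec y)) ≤
        bnd * Real.sqrt (y ⬝ᵥ y)) :
    ∃ ε₀ > (0 : ℝ), ∀ ε : ℝ, 0 < ε → ε < ε₀ → ∃ β' > (0 : ℝ), ∀ i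
      (Θ Θinv : Matrix (Fin m₁ ⊕ Fin m₂) (Fin m₁ ⊕ Fin m₂) ℝ),
      Θ = Matrix.fromBlocks 1 0 0 (ε • 1) → Θinv = Matrix.fromBlocks 1 0 0 (ε⁻¹ • 1) →
      ∀ y : Fin m₁ ⊕ Fin m₂ → ℝ,
        y ⬝ᵥ (Θ * (V * J i * Vᵀ) * Θinv).mulVec y ≤ -β' * (y ⬝ᵥ y) := by
  set b := max bnd 0 with hb
  have hb0 : 0 ≤ b := le_max_right _ _
  refine ⟨β / (b + 1), by positivity, fun ε hε hε' => ?_⟩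
  have hεb : ε * (b + 1) < β := by
    exact (lt_div_iff₀ (by linarith)).mp hε'
  refine ⟨β - ε * b / 2, by nlinarith, fun i Θ Θinv hΘ hΘinv y => ?_⟩
  subst hΘ hΘinv hV
  set B := W₂ * J₂₁ i * W₁ᵀ with hBdef
  set A₁ := W₁ * J₁ i * W₁ᵀ with hA₁
  set A₂ := W₂ * J₂ i * W₂ᵀ with hA₂
  have hM : Matrix.fromBlocks (1 : Matrix (Fin m₁) (Fin m₁) ℝ) 0 0 (ε • 1) *
      (Matrix.fromBlocks W₁ 0 0 W₂ * J i * (Matrix.fromBlocks W₁ 0 0 W₂)ᵀ) *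
      Matrix.fromBlocks 1 0 0 (ε⁻¹ • 1) =
      Matrix.fromBlocks A₁ 0 (ε • B) A₂ := by
    rw [hJ i]
    simp only [Matrix.fromBlocks_transpose, Matrix.transpose_zero, Matrix.fromBlocks_multiply,
      Matrix.mul_zero, Matrix.zero_mul, Matrix.smul_mul, Matrix.mul_smul, add_zero, zero_add,
      Matrix.mul_one, Matrix.one_mul, smul_smul, smul_zero]
    rw [inv_mul_cancel₀ hε.ne', one_smul]
  rw [hM]
  obtain ⟨y₁, y₂, rfl⟩ : ∃ y₁ y₂, y = Sum.elim y₁ y₂ :=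
    ⟨y ∘ Sum.inl, y ∘ Sum.inr, (Sum.elim_comp_inl_inr y).symm⟩
  rw [Matrix.fromBlocks_mulVec, sumElim_dotProduct_sumElim]
  simp only [Matrix.zero_mulVec, add_zero, dotProduct_add, Matrix.smul_mulVec,
    dotProduct_smul, smul_eq_mul, Sum.elim_comp_inl, Sum.elim_comp_inr,
    sumElim_dotProduct_sumElim]
  have hc : y₂ ⬝ᵥ B.mulVec y₁ ≤ b * (Real.sqrt (y₂ ⬝ᵥ y₂) * Real.sqrt (y₁ ⬝ᵥ y₁)) := by
    calc y₂ ⬝ᵥ B.mulVec y₁ ≤ Real.sqrt (y₂ ⬝ᵥ y₂) * Real.sqrt (B.mulVec y₁ ⬝ᵥ B.mulVec y₁) :=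
          dp_cauchy _ _
      _ ≤ Real.sqrt (y₂ ⬝ᵥ y₂) * (b * Real.sqrt (y₁ ⬝ᵥ y₁)) := by
          apply mul_le_mul_of_nonneg_left _ (Real.sqrt_nonneg _)
          exact (hB i y₁).trans (mul_le_mul_of_nonneg_right (le_max_left _ _) (Real.sqrt_nonneg _))
      _ = b * (Real.sqrt (y₂ ⬝ᵥ y₂) * Real.sqrt (y₁ ⬝ᵥ y₁)) := by ring
  have hs1 : Real.sqrt (y₁ ⬝ᵥ y₁) ^ 2 = y₁ ⬝ᵥ y₁ := Real.sq_sqrt (dp_self_nonneg y₁)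
  have hs2 : Real.sqrt (y₂ ⬝ᵥ y₂) ^ 2 = y₂ ⬝ᵥ y₂ := Real.sq_sqrt (dp_self_nonneg y₂)
  have ha1 := h₁ i y₁
  have ha2 := h₂ i y₂
  have hr : Real.sqrt (y₂ ⬝ᵥ y₂) * Real.sqrt (y₁ ⬝ᵥ y₁) ≤ (y₁ ⬝ᵥ y₁ + y₂ ⬝ᵥ y₂) / 2 := by
    nlinarith [sq_nonneg (Real.sqrt (y₁ ⬝ᵥ y₁) - Real.sqrt (y₂ ⬝ᵥ y₂))]
  have key : ε * (y₂ ⬝ᵥ B.mulVec y₁) ≤ ε * b / 2 * (y₁ ⬝ᵥ y₁ + y₂ ⬝ᵥ y₂) := by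
    calc ε * (y₂ ⬝ᵥ B.mulVec y₁) ≤ ε * (b * ((y₁ ⬝ᵥ y₁ + y₂ ⬝ᵥ y₂) / 2)) :=
          mul_le_mul_of_nonneg_left (hc.trans (mul_le_mul_of_nonneg_left hr hb0)) hε.le
      _ = ε * b / 2 * (y₁ ⬝ᵥ y₁ + y₂ ⬝ᵥ y₂) := by ring
  linarith [ha1, ha2, key]
end
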